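/- arXiv:2004.08963 — 4 statements merged into one kernel-verified Lean document; each statement's English description precedes it below -/
import Mathlib

section
/- There is no decomposition of K_16 into 12 edge-disjoint copies of a graph whose degree sequence is (5,3,3,3,3,3). -/
open SimpleGraph

/-- `f` is a decomposition of `H` into `m` edge-disjoint copies of `G`. -/
def IsDecompFun {V W : Type*} (H : SimpleGraph V) (G : SimpleGraph W)
    {m : ℕ} (f : Fin m → H.Subgraph) : Prop :=
  (∀ i, Nonempty ((f i).coe ≃g G)) ∧
  ∀ e ∈ H.edgeSet, ∃! i, e ∈ SimpleGraph.Subgraph.edgeSet (f i)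

/-- There is no decomposition of `K_16` into 12 edge-disjoint copies of a graph
whose degree sequence is `(5,3,3,3,3,3)`. -/
theorem stmt_2 (G : SimpleGraph (Fin 6)) [DecidableRel G.Adj]
    (hdeg : (Finset.univ.val.map (fun x => G.degree x) : Multiset ℕ) = {5, 3, 3, 3, 3, 3}) :
    ¬ ∃ f : Fin 12 → (⊤ : SimpleGraph (Fin 16)).Subgraph,
        IsDecompFun (⊤ : SimpleGraph (Fin 16)) G f := by
  classical
  rintro ⟨f, hiso, hcover⟩
  -- degrees of G are 3 or 5
  have hG35 : ∀ x : Fin 6, G.degree x = 3 ∨ G.degree x = 5 := by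
    intro x
    have hx : G.degree x ∈ (Finset.univ.val.map fun x => G.degree x) :=
      Multiset.mem_map_of_mem _ (by simp)
    rw [hdeg] at hx
    simp only [Multiset.insert_eq_cons, Multiset.mem_cons, Multiset.mem_singleton] at hx
    tauto
  -- exactly one vertex of G has degree 5
  have hG5 : (Finset.univ.filter fun x : Fin 6 => G.degree x = 5).card = 1 := by
    have h := congrArg (Multiset.count 5) hdeg
    rw [Multiset.count_map] at h
    have h2 : Multiset.count 5 ({5, 3, 3, 3, 3, 3} : Multiset ℕ) = 1 := by decide
    rw [h2] at h
    have hcg : (Finset.univ.filter fun x : Fin 6 => G.degree x = 5) =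
        Finset.univ.filter fun x : Fin 6 => 5 = G.degree x :=
      Finset.filter_congr fun x _ => eq_comm
    rw [hcg]
    simpa [Finset.card_def, Finset.filter_val] using h
  -- local degree function
  set d : Fin 12 → Fin 16 → ℕ :=
    fun i v => (Finset.univ.filter fun w => (f i).Adj v w).card with hd
  have hvert : ∀ i v, d i v ≠ 0 → v ∈ (f i).verts := by
    intro i v h
    obtain ⟨w, hw⟩ := Finset.card_pos.mp (Nat.pos_of_ne_zero h)
    exact ((Finset.mem_filter.mp hw).2).fst_mem
  have hdval : ∀ i v (h : v ∈ (f i).verts), d i v = G.degree ((hiso i).some ⟨v, h⟩) := by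
    intro i v h
    rw [← SimpleGraph.card_neighborSet_eq_degree]
    show (Finset.univ.filter fun w => (f i).Adj v w).card = _
    rw [← Fintype.card_subtype]
    exact Fintype.card_congr ((Equiv.subtypeEquivRight fun w => Iff.rfl).trans
      ((SimpleGraph.Subgraph.coeNeighborSetEquiv ⟨v, h⟩).symm.trans
        (((hiso i).some).mapNeighborSet ⟨v, h⟩)))
  -- d values are in {0, 3, 5}
  have h035 : ∀ i v, d i v = 0 ∨ d i v = 3 ∨ d i v = 5 := by
    intro i v
    by_cases h0 : d i v = 0
    · exact Or.inl h0
    · have hm := hvert i v h0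
      rw [hdval i v hm]
      rcases hG35 ((hiso i).some ⟨v, hm⟩) with h | h
      · exact Or.inr (Or.inl h)
      · exact Or.inr (Or.inr h)
  -- each copy has exactly one vertex of local degree 5
  have hd1 : ∀ i, (Finset.univ.filter fun v : Fin 16 => d i v = 5).card = 1 := by
    intro i
    rw [← hG5]
    apply Finset.card_bij
      (i := fun v hv => (hiso i).some ⟨v, hvert i v (by
        have := (Finset.mem_filter.mp hv).2; omega)⟩)
    · intro v hv
      have h5 := (Finset.mem_filter.mp hv).2
      have hm := hvert i v (by omega)
      simp only [Finset.mem_filter, Finset.mem_univ, true_and]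
      rw [← hdval i v hm]
      exact h5
    · intro v1 hv1 v2 hv2 heq
      exact congrArg Subtype.val ((hiso i).some.toEquiv.injective heq)
    · intro x hx
      have h5 := (Finset.mem_filter.mp hx).2
      refine ⟨(((hiso i).some.symm x : (f i).verts) : Fin 16),
        Finset.mem_filter.mpr ⟨Finset.mem_univ _, ?_⟩, ?_⟩
      · rw [hdval i _ ((hiso i).some.symm x).2]
        have h1 : (⟨(((hiso i).some.symm x : (f i).verts) : Fin 16),
            ((hiso i).some.symm x).2⟩ : (f i).verts) = (hiso i).some.symm x := rfl
        rw [h1, (hiso i).some.apply_symm_apply x]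
        exact h5
      · have h1 : (⟨(((hiso i).some.symm x : (f i).verts) : Fin 16),
            ((hiso i).some.symm x).2⟩ : (f i).verts) = (hiso i).some.symm x := rfl
        rw [h1]
        exact (hiso i).some.apply_symm_apply x
  -- for distinct v w there is exactly one copy containing the edge
  have huniq : ∀ v w : Fin 16, v ≠ w → ∃! i, (f i).Adj v w := by
    intro v w hvw
    have he : s(v, w) ∈ (⊤ : SimpleGraph (Fin 16)).edgeSet := by simp [hvw]
    obtain ⟨i, hi, hu⟩ := hcover _ he
    exact ⟨i, SimpleGraph.Subgraph.mem_edgeSet.mp hi,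
      fun j hj => hu j (SimpleGraph.Subgraph.mem_edgeSet.mpr hj)⟩
  -- sum of local degrees at each vertex is 15
  have hsum : ∀ v : Fin 16, ∑ i, d i v = 15 := by
    intro v
    have hstep : ∀ i, d i v = ∑ w : Fin 16, if (f i).Adj v w then 1 else 0 := by
      intro i
      show (Finset.univ.filter fun w => (f i).Adj v w).card = _
      rw [Finset.card_filter]
    rw [Finset.sum_congr rfl fun i _ => hstep i, Finset.sum_comm]
    have hone : ∀ w : Fin 16, (∑ i, if (f i).Adj v w then 1 else 0) =
        if w = v then 0 else 1 := by
      intro w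
      by_cases hwv : w = v
      · subst hwv
        rw [if_pos rfl]
        apply Finset.sum_eq_zero
        intro i _
        simp only [ite_eq_right_iff]
        intro hadj
        exact absurd hadj.adj_sub (by simp)
      · obtain ⟨i0, hi0, hu⟩ := huniq v w (Ne.symm hwv)
        rw [if_neg hwv, ← Finset.card_filter]
        have hfe : (Finset.univ.filter fun i => (f i).Adj v w) = {i0} := by
          ext j
          simp only [Finset.mem_filter, Finset.mem_univ, true_and, Finset.mem_singleton]
          exact ⟨fun h => hu j h, fun h => h ▸ hi0⟩
        rw [hfe, Finset.card_singleton]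
    rw [Finset.sum_congr rfl fun w _ => hone w]
    have hrw : ∀ w : Fin 16, (if w = v then 0 else 1) = if w ≠ v then 1 else 0 := by
      intro w; by_cases h : w = v <;> simp [h]
    rw [Finset.sum_congr rfl fun w _ => hrw w, ← Finset.card_filter,
      Finset.filter_ne' Finset.univ v, Finset.card_erase_of_mem (Finset.mem_univ v)]
    simp
  -- the degree-5/degree-3 copy counts at each vertex
  have hab : ∀ v : Fin 16, 5 * (Finset.univ.filter fun i => d i v = 5).card
      + 3 * (Finset.univ.filter fun i => d i v = 3).card = 15 := by
    intro v
    have hsplit : ∑ i, d i v =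
        ∑ i, (5 * (if d i v = 5 then 1 else 0) + 3 * (if d i v = 3 then 1 else 0)) := by
      apply Finset.sum_congr rfl
      intro i _
      rcases h035 i v with h | h | h <;> rw [h] <;> norm_num
    rw [hsum v] at hsplit
    rw [Finset.sum_add_distrib, ← Finset.mul_sum, ← Finset.mul_sum,
      ← Finset.card_filter, ← Finset.card_filter] at hsplit
    omega
  -- total number of degree-5 incidences is 12
  have htot : ∑ v : Fin 16, (Finset.univ.filter fun i => d i v = 5).card = 12 := by
    have hstep : ∀ v : Fin 16, (Finset.univ.filter fun i => d i v = 5).card =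
        ∑ i, if d i v = 5 then 1 else 0 := fun v => Finset.card_filter _ _
    rw [Finset.sum_congr rfl fun v _ => hstep v, Finset.sum_comm]
    have hstep2 : ∀ i, (∑ v : Fin 16, if d i v = 5 then 1 else 0) = 1 := by
      intro i
      rw [← Finset.card_filter]
      exact hd1 i
    rw [Finset.sum_congr rfl fun i _ => hstep2 i]
    simp
  -- there are two distinct vertices that get degree 5 in some copy
  have hA : ∃ v1 v2 : Fin 16, v1 ≠ v2 ∧ (∃ i, d i v1 = 5) ∧ (∃ j, d j v2 = 5) := by
    have hcard : 12 ≤ 3 * (Finset.univ.filter fun v : Fin 16 => ∃ i, d i v = 5).card := by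
      calc 12 = ∑ v : Fin 16, (Finset.univ.filter fun i => d i v = 5).card := htot.symm
        _ = ∑ v ∈ Finset.univ.filter fun v : Fin 16 => ∃ i, d i v = 5,
              (Finset.univ.filter fun i => d i v = 5).card := by
            symm
            apply Finset.sum_subset (Finset.filter_subset _ _)
            intro v _ hv
            rw [Finset.mem_filter] at hv
            push_neg at hv
            have hnone := hv (Finset.mem_univ v)
            rw [Finset.card_eq_zero, Finset.filter_eq_empty_iff]
            intro i _
            exact hnone i
        _ ≤ ∑ v ∈ Finset.univ.filter fun v : Fin 16 => ∃ i, d i v = 5, 3 := by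
            apply Finset.sum_le_sum
            intro v _
            have := hab v
            omega
        _ = 3 * (Finset.univ.filter fun v : Fin 16 => ∃ i, d i v = 5).card := by
            rw [Finset.sum_const, smul_eq_mul, mul_comm]
    have h2 : 1 < (Finset.univ.filter fun v : Fin 16 => ∃ i, d i v = 5).card := by omega
    obtain ⟨v1, hv1, v2, hv2, hne⟩ := Finset.one_lt_card.mp h2
    exact ⟨v1, v2, hne, (Finset.mem_filter.mp hv1).2, (Finset.mem_filter.mp hv2).2⟩
  obtain ⟨v1, v2, hne, h1, h2⟩ := hA
  obtain ⟨i, hi, -⟩ := huniq v1 v2 hne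
  have hd1pos : d i v1 ≠ 0 :=
    Finset.card_ne_zero_of_mem (Finset.mem_filter.mpr ⟨Finset.mem_univ v2, hi⟩)
  have hd2pos : d i v2 ≠ 0 :=
    Finset.card_ne_zero_of_mem (Finset.mem_filter.mpr ⟨Finset.mem_univ v1, hi.symm⟩)
  have hno3 : ∀ v : Fin 16, (∃ j, d j v = 5) → ∀ k, d k v ≠ 3 := by
    intro v hv k hk
    have h15 := hab v
    obtain ⟨j, hj⟩ := hv
    have hA1 : 1 ≤ (Finset.univ.filter fun j => d j v = 5).card :=
      Finset.card_pos.mpr ⟨j, Finset.mem_filter.mpr ⟨Finset.mem_univ _, hj⟩⟩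
    have hB1 : 1 ≤ (Finset.univ.filter fun j => d j v = 3).card :=
      Finset.card_pos.mpr ⟨k, Finset.mem_filter.mpr ⟨Finset.mem_univ _, hk⟩⟩
    omega
  have hv1_5 : d i v1 = 5 := by
    rcases h035 i v1 with h | h | h
    · exact absurd h hd1pos
    · exact absurd h (hno3 v1 h1 i)
    · exact h
  have hv2_5 : d i v2 = 5 := by
    rcases h035 i v2 with h | h | h
    · exact absurd h hd2pos
    · exact absurd h (hno3 v2 h2 i)
    · exact h
  have htwo : 1 < (Finset.univ.filter fun v : Fin 16 => d i v = 5).card :=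
    Finset.one_lt_card.mpr ⟨v1, Finset.mem_filter.mpr ⟨Finset.mem_univ _, hv1_5⟩,
      v2, Finset.mem_filter.mpr ⟨Finset.mem_univ _, hv2_5⟩, hne⟩
  have := hd1 i
  omega
end

section
/- There is no decomposition of K_20 into edge-disjoint copies of a graph with degree sequence (5,3,3,3,3,3): equivalently, since each vertex of K_20 has degree 19 and the only partition of 19 into parts from {3,5} is 5+5+3+3+3, each of the 20 vertices would need to appear as the degree-5 vertex in exactly two of the 19 copies, requiring 40 = 2·19 degree-5 slots, a contradiction. -/
/-!
Let the parts of a decomposition be copies of `G`. In each part the vertex degrees are those of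
`G` (padded with zeros), so they total 20 and exactly one of them is 5. At a vertex of `K₂₀` the
degrees in the parts are 0, 3 or 5 and add up to 19, and `5a + 3b = 19` forces exactly two 5s.
Summing all degrees over vertices and parts gives `20 · 19 = 20 · #parts`, so there are 19 parts;
counting the pairs (vertex, part) in which the vertex has degree 5 then gives the contradiction
`20 · 2 = 19`.
-/

open SimpleGraph

/-- `H` decomposes into edge-disjoint copies of `G`. -/
def HasDecomp {V W : Type*} (H : SimpleGraph V) (G : SimpleGraph W) : Prop :=
  ∃ parts : Set H.Subgraph,
    (∀ p ∈ parts, Nonempty (p.coe ≃g G)) ∧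
    ∀ e ∈ H.edgeSet, ∃! p, p ∈ parts ∧ e ∈ SimpleGraph.Subgraph.edgeSet p

open Finset

theorem Finset.sum_ncard_eq_ncard_of_existsUnique {α ι : Type*} [Finite α] {s : Set α}
    {P : Finset ι} {A : ι → Set α} (hsub : ∀ i ∈ P, A i ⊆ s)
    (huniq : ∀ x ∈ s, ∃! i, i ∈ P ∧ x ∈ A i) :
    ∑ i ∈ P, (A i).ncard = s.ncard := by
  have hunion : s = ⋃ i ∈ (P : Set ι), A i := by
    ext x
    simp only [Set.mem_iUnion, Finset.mem_coe, exists_prop]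
    exact ⟨fun hx => (huniq x hx).exists, fun ⟨i, hi, hx⟩ => hsub i hi hx⟩
  have hdisj : (P : Set ι).PairwiseDisjoint A := by
    intro i hi j hj hij
    refine Set.disjoint_left.mpr fun x hxi hxj => hij ?_
    exact (huniq x (hsub i hi hxi)).unique ⟨hi, hxi⟩ ⟨hj, hxj⟩
  rw [hunion, P.finite_toSet.ncard_biUnion (fun _ _ => Set.toFinite _) hdisj,
    finsum_mem_coe_finset]

namespace SimpleGraph

variable {V W : Type*} {H : SimpleGraph V} {G : SimpleGraph W}

theorem sum_ncard_neighborSet_of_existsUnique_edgeSet [Finite V] {P : Finset H.Subgraph}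
    (h : ∀ e ∈ H.edgeSet, ∃! p, p ∈ P ∧ e ∈ p.edgeSet) (v : V) :
    ∑ p ∈ P, (p.neighborSet v).ncard = (H.neighborSet v).ncard :=
  Finset.sum_ncard_eq_ncard_of_existsUnique (fun p _ => p.neighborSet_subset v)
    fun w hw => by simpa only [Subgraph.mem_neighborSet, Subgraph.mem_edgeSet] using h s(v, w) hw

namespace Subgraph

variable {p : H.Subgraph}

theorem ncard_neighborSet_of_notMem_verts {v : V} (hv : v ∉ p.verts) :
    (p.neighborSet v).ncard = 0 := by
  rw [Set.eq_empty_of_forall_notMem (s := p.neighborSet v) fun w hw => hv (p.edge_vert hw),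
    Set.ncard_empty]

theorem ncard_neighborSet_eq_degree_of_iso [G.LocallyFinite] (f : p.coe ≃g G) (v : p.verts) :
    (p.neighborSet v).ncard = G.degree (f v) :=
  calc (p.neighborSet v).ncard = Nat.card (p.coe.neighborSet v) :=
        (Nat.card_coe_set_eq _).symm.trans (Nat.card_congr (coeNeighborSetEquiv v).symm)
    _ = Nat.card (G.neighborSet (f v)) := Nat.card_congr (f.mapNeighborSet v)
    _ = G.degree (f v) := by rw [Nat.card_eq_fintype_card, card_neighborSet_eq_degree]

theorem ncard_neighborSet_eq_zero_or_exists_of_iso [G.LocallyFinite] (f : p.coe ≃g G) (v : V) :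
    (p.neighborSet v).ncard = 0 ∨ ∃ w, (p.neighborSet v).ncard = G.degree w := by
  by_cases hv : v ∈ p.verts
  · exact Or.inr ⟨f ⟨v, hv⟩, ncard_neighborSet_eq_degree_of_iso f ⟨v, hv⟩⟩
  · exact Or.inl (ncard_neighborSet_of_notMem_verts hv)

theorem sum_comp_ncard_neighborSet_of_iso [Fintype V] [Fintype W] [G.LocallyFinite]
    (f : p.coe ≃g G) {φ : ℕ → ℕ} (hφ : φ 0 = 0) :
    ∑ v, φ (p.neighborSet v).ncard = ∑ w, φ (G.degree w) := by
  classical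
  calc ∑ v, φ (p.neighborSet v).ncard
      = ∑ v : p.verts, φ (p.neighborSet v).ncard := by
        rw [← Fintype.sum_subtype_add_sum_subtype (· ∈ p.verts), add_eq_left]
        exact Finset.sum_eq_zero fun v _ => by rw [ncard_neighborSet_of_notMem_verts v.2, hφ]
    _ = ∑ v : p.verts, φ (G.degree (f v)) := by
        simp only [ncard_neighborSet_eq_degree_of_iso f]
    _ = ∑ w, φ (G.degree w) := f.toEquiv.sum_comp (fun w => φ (G.degree w))

end Subgraph

end SimpleGraph

theorem Finset.card_filter_eq_two_of_sum_eq_nineteen {ι : Type*} {s : Finset ι} {f : ι → ℕ}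
    (hf : ∀ i ∈ s, f i = 0 ∨ f i = 3 ∨ f i = 5) (hsum : ∑ i ∈ s, f i = 19) :
    #{i ∈ s | f i = 5} = 2 := by
  have hsplit : ∑ i ∈ s, f i = 5 * #{i ∈ s | f i = 5} + 3 * #{i ∈ s | f i = 3} := by
    rw [Finset.card_filter, Finset.card_filter, Finset.mul_sum, Finset.mul_sum,
      ← Finset.sum_add_distrib]
    refine Finset.sum_congr rfl fun i hi => ?_
    rcases hf i hi with h | h | h <;> simp [h]
  omega

/-- There is no decomposition of `K_20` into edge-disjoint copies of a graph
with degree sequence `(5,3,3,3,3,3)`. -/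
theorem stmt_3 (G : SimpleGraph (Fin 6)) [DecidableRel G.Adj]
    (hdeg : (Finset.univ.val.map (fun x => G.degree x) : Multiset ℕ) = {5, 3, 3, 3, 3, 3}) :
    ¬ HasDecomp (⊤ : SimpleGraph (Fin 20)) G := by
  rintro ⟨parts, hiso, huniq⟩
  obtain ⟨P, rfl⟩ := parts.toFinite.exists_finset_coe
  set d := fun (p : (⊤ : SimpleGraph (Fin 20)).Subgraph) v => (p.neighborSet v).ncard
  have hsum_comp_part : ∀ p ∈ P, ∀ φ : ℕ → ℕ, φ 0 = 0 →
      ∑ v, φ (d p v) = (({5, 3, 3, 3, 3, 3} : Multiset ℕ).map φ).sum := fun p hp φ hφ => by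
    obtain ⟨f⟩ := hiso p hp
    rw [Subgraph.sum_comp_ncard_neighborSet_of_iso f hφ, ← hdeg, Multiset.map_map]
    rfl
  have hsum_part : ∀ p ∈ P, ∑ v, d p v = 20 := fun p hp => hsum_comp_part p hp id rfl
  have hfive_part : ∀ p ∈ P, #{v | d p v = 5} = 1 := fun p hp => by
    rw [Finset.card_filter]
    exact hsum_comp_part p hp (if · = 5 then 1 else 0) rfl
  have hdeg_part : ∀ p ∈ P, ∀ v, d p v = 0 ∨ d p v = 3 ∨ d p v = 5 := by
    intro p hp v
    obtain ⟨f⟩ := hiso p hp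
    rcases Subgraph.ncard_neighborSet_eq_zero_or_exists_of_iso f v with h | ⟨w, h⟩
    · exact Or.inl h
    · have hw : G.degree w ∈ ({5, 3, 3, 3, 3, 3} : Multiset ℕ) :=
        hdeg ▸ Multiset.mem_map_of_mem _ (Finset.mem_univ_val w)
      simp only [Multiset.insert_eq_cons, Multiset.mem_cons, Multiset.mem_singleton] at hw
      rw [show d p v = G.degree w from h]
      omega
  have hsum_vertex (v : Fin 20) : ∑ p ∈ P, d p v = 19 := by
    rw [sum_ncard_neighborSet_of_existsUnique_edgeSet huniq, neighborSet_top, Set.ncard_compl]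
    simp
  have hcard : 20 * 19 = 20 * #P :=
    calc 20 * 19 = ∑ v, ∑ p ∈ P, d p v := by simp [hsum_vertex]
      _ = ∑ p ∈ P, ∑ v, d p v := Finset.sum_comm
      _ = 20 * #P := by simp [Finset.sum_congr rfl hsum_part, mul_comm]
  have htwice : ∑ v, #{p ∈ P | d p v = 5} = 20 * 2 := by
    simp [Finset.card_filter_eq_two_of_sum_eq_nineteen (hdeg_part · · _) (hsum_vertex _)]
  have honce : ∑ v, #{p ∈ P | d p v = 5} = #P := by
    simp only [Finset.card_filter]
    rw [Finset.sum_comm]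
    simp [Finset.sum_congr rfl hfive_part]
  omega
end

section
/- There is no decomposition of K_16 into edge-disjoint copies of a graph G with degree sequence (4,4,3,3,3,3) in which exactly two pairs of degree-3 vertices of G are adjacent: any vertex of K_16 is covered with degrees summing to 15 from {3,4}, forcing 8 vertices to receive degrees {3,3,3,3,3}; these 8 vertices contribute C(8,2)=28 pairs each of which must be adjacent within some copy as a pair of degree-3 vertices, but the 12 copies provide only 12·2 = 24 such adjacent pairs, a contradiction. -/
/-!
Every vertex of `K₁₆` has degree `15 = 4a + 3b`, where `a` and `b` count the parts in which it
has degree `4` and `3`; hence `a ∈ {0, 3}`. The `12` parts have `24` vertices of degree `4` in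
total, so `8` vertices never have degree `4`. Each of the `28` edges among them joins two
degree-`3` vertices of the part containing it, but the parts only have `12 · 2 = 24` such edges.
-/

open SimpleGraph

open Finset

namespace SimpleGraph

variable {V W : Type*} {H : SimpleGraph V} {G : SimpleGraph W}

lemma Iso.image_edgeSet {G' : SimpleGraph V} (φ : G ≃g G') :
    Sym2.map φ '' G.edgeSet = G'.edgeSet := by
  refine subset_antisymm φ.toHom.image_edgeSet_subset fun e he ↦
    ⟨Sym2.map φ.symm e, φ.symm.toHom.image_edgeSet_subset ⟨e, he, rfl⟩, ?_⟩
  simp [Sym2.map_map]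

namespace Subgraph

variable {p : H.Subgraph}

lemma degree_eq_of_iso (φ : p.coe ≃g G) (v : V) (hv : v ∈ p.verts)
    [Fintype (p.neighborSet v)] [Fintype (G.neighborSet (φ ⟨v, hv⟩))] :
    p.degree v = G.degree (φ ⟨v, hv⟩) := by
  rw [← p.coe_degree ⟨v, hv⟩, φ.degree_eq]

lemma edgeSet_eq_image_of_iso (φ : p.coe ≃g G) :
    p.edgeSet = Sym2.map (fun w ↦ (φ.symm w : V)) '' G.edgeSet := by
  rw [← p.image_coe_edgeSet_coe, ← φ.symm.image_edgeSet, Set.image_image]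
  simp only [Sym2.map_map]
  rfl

variable [∀ v, Fintype (p.neighborSet v)] [∀ w, Fintype (G.neighborSet w)]

lemma degree_symm_apply_of_iso (φ : p.coe ≃g G) (w : W) :
    p.degree (φ.symm w) = G.degree w := by
  rw [← p.coe_degree (φ.symm w), φ.symm.degree_eq]

lemma sum_comp_degree_of_iso [Fintype V] [Fintype W] {M : Type*} [AddCommMonoid M]
    (φ : p.coe ≃g G) (g : ℕ → M) (hg : g 0 = 0) :
    ∑ v, g (p.degree v) = ∑ w, g (G.degree w) := by
  classical
  let f : W ↪ V := ⟨fun w ↦ φ.symm w, Subtype.val_injective.comp φ.symm.injective⟩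
  have hvanish : ∀ v ∉ univ.map f, g (p.degree v) = 0 := by
    intro v hv
    have : v ∉ p.verts := fun hv' ↦ hv (mem_map.mpr ⟨φ ⟨v, hv'⟩, mem_univ _, by simp [f]⟩)
    rw [degree_of_notMem_verts this, hg]
  calc ∑ v, g (p.degree v) = ∑ v ∈ univ.map f, g (p.degree v) :=
        (sum_subset (subset_univ _) fun v _ hv ↦ hvanish v hv).symm
    _ = ∑ w, g (G.degree w) := by
        simp [f, degree_symm_apply_of_iso]

lemma ncard_edgeSet_degree_of_iso (φ : p.coe ≃g G) (Q : ℕ → Prop) :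
    {e ∈ p.edgeSet | ∀ x ∈ e, Q (p.degree x)}.ncard =
      {e ∈ G.edgeSet | ∀ x ∈ e, Q (G.degree x)}.ncard := by
  have hinj : Function.Injective fun w ↦ (φ.symm w : V) :=
    Subtype.val_injective.comp φ.symm.injective
  rw [← Set.ncard_image_of_injective _ (Sym2.map.injective hinj)]
  congr 1
  ext e
  simp only [edgeSet_eq_image_of_iso φ, Set.mem_ofPred_eq, Set.mem_image]
  constructor
  · rintro ⟨⟨e', he', rfl⟩, hQ⟩
    refine ⟨e', ⟨he', fun x hx ↦ ?_⟩, rfl⟩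
    simpa [degree_symm_apply_of_iso] using hQ _ (Sym2.mem_map.mpr ⟨x, hx, rfl⟩)
  · rintro ⟨e', ⟨he', hQ⟩, rfl⟩
    refine ⟨⟨e', he', rfl⟩, fun x hx ↦ ?_⟩
    obtain ⟨y, hy, rfl⟩ := Sym2.mem_map.mp hx
    simpa [degree_symm_apply_of_iso] using hQ y hy

end Subgraph

lemma sum_degree_eq_degree_of_existsUnique [Fintype V] [DecidableRel H.Adj]
    [∀ (p : H.Subgraph) v, Fintype (p.neighborSet v)] {P : Finset H.Subgraph}
    (hP : ∀ e ∈ H.edgeSet, ∃! p, p ∈ P ∧ e ∈ p.edgeSet) (v : V) :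
    ∑ p ∈ P, p.degree v = H.degree v := by
  classical
  have hcount : ∀ u, #{p ∈ P | p.Adj v u} = if H.Adj v u then 1 else 0 := by
    intro u
    split_ifs with h
    · obtain ⟨p, hp, huniq⟩ := hP s(v, u) h
      rw [card_eq_one]
      refine ⟨p, eq_singleton_iff_unique_mem.mpr ⟨mem_filter.mpr hp, fun q hq ↦ ?_⟩⟩
      exact huniq q (mem_filter.mp hq)
    · exact card_eq_zero.mpr (filter_eq_empty_iff.mpr fun p _ hp ↦ h (p.adj_sub hp))
  calc ∑ p ∈ P, p.degree v = ∑ p ∈ P, #{u | p.Adj v u} := by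
        refine sum_congr rfl fun p _ ↦ ?_
        rw [← Subgraph.finset_card_neighborSet_eq_degree]
        congr 1
        ext u
        simp
    _ = ∑ u, #{p ∈ P | p.Adj v u} := by simp only [card_filter]; exact sum_comm
    _ = H.degree v := by
        simp [hcount, ← card_neighborFinset_eq_degree, neighborFinset_eq_filter]

lemma sum_comp_degree_eq_of_map_degree [Fintype W] [DecidableRel G.Adj] {s : Multiset ℕ}
    (hdeg : univ.val.map (fun x ↦ G.degree x) = s)
    {M : Type*} [AddCommMonoid M] (g : ℕ → M) :
    ∑ w, g (G.degree w) = (s.map g).sum := by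
  rw [← hdeg, Multiset.map_map]
  rfl

end SimpleGraph

local notation "K₁₆" => (⊤ : SimpleGraph (Fin 16))

/-- What a decomposition of `K₁₆` into copies of a graph with degree sequence `(4,4,3,3,3,3)` and
two edges between degree-`3` vertices remembers of its parts. -/
structure IsDegreeProfileDecomp (P : Finset (Subgraph K₁₆))
    [∀ (p : Subgraph K₁₆) v, Fintype (p.neighborSet v)] : Prop where
  existsUnique_mem_edgeSet : ∀ e ∈ edgeSet K₁₆, ∃! p, p ∈ P ∧ e ∈ p.edgeSet
  degree_mem : ∀ p ∈ P, ∀ v, p.degree v = 0 ∨ p.degree v = 3 ∨ p.degree v = 4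
  sum_degree : ∀ p ∈ P, ∑ v, p.degree v = 20
  card_degree_four : ∀ p ∈ P, #{v | p.degree v = 4} = 2
  ncard_edgeSet_degree_three : ∀ p ∈ P, {e ∈ p.edgeSet | ∀ x ∈ e, p.degree x = 3}.ncard = 2

lemma isDegreeProfileDecomp_of_forall_iso {W : Type*} [Fintype W] {G : SimpleGraph W}
    [DecidableRel G.Adj]
    (hdeg : (univ.val.map (fun x ↦ G.degree x) : Multiset ℕ) = {4, 4, 3, 3, 3, 3})
    (hpairs : {e ∈ G.edgeSet | ∀ x ∈ e, G.degree x = 3}.ncard = 2)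
    {P : Finset (Subgraph K₁₆)} [∀ (p : Subgraph K₁₆) v, Fintype (p.neighborSet v)]
    (hcover : ∀ e ∈ edgeSet K₁₆, ∃! p, p ∈ P ∧ e ∈ p.edgeSet)
    (hiso : ∀ p ∈ P, Nonempty (p.coe ≃g G)) : IsDegreeProfileDecomp P where
  existsUnique_mem_edgeSet := hcover
  degree_mem p hp v := by
    obtain ⟨φ⟩ := hiso p hp
    by_cases hv : v ∈ p.verts
    · have h := Multiset.mem_map_of_mem (fun x ↦ G.degree x) (mem_univ (φ ⟨v, hv⟩))
      rw [hdeg] at h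
      rw [Subgraph.degree_eq_of_iso φ v hv]
      simp only [Multiset.insert_eq_cons, Multiset.mem_cons, Multiset.mem_singleton] at h
      omega
    · exact Or.inl (Subgraph.degree_of_notMem_verts hv)
  sum_degree p hp := by
    obtain ⟨φ⟩ := hiso p hp
    simpa using (Subgraph.sum_comp_degree_of_iso φ id rfl).trans
      (sum_comp_degree_eq_of_map_degree hdeg id)
  card_degree_four p hp := by
    obtain ⟨φ⟩ := hiso p hp
    rw [card_filter, Subgraph.sum_comp_degree_of_iso φ (fun k ↦ if k = 4 then 1 else 0) rfl,
      sum_comp_degree_eq_of_map_degree hdeg (fun k ↦ if k = 4 then 1 else 0)]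
    rfl
  ncard_edgeSet_degree_three p hp := by
    obtain ⟨φ⟩ := hiso p hp
    rw [Subgraph.ncard_edgeSet_degree_of_iso φ (· = 3), hpairs]

namespace IsDegreeProfileDecomp

variable {P : Finset (Subgraph K₁₆)} [∀ (p : Subgraph K₁₆) v, Fintype (p.neighborSet v)]

lemma four_mul_add_three_mul (hP : IsDegreeProfileDecomp P) (v : Fin 16) :
    4 * #{p ∈ P | p.degree v = 4} + 3 * #{p ∈ P | p.degree v = 3} = 15 := by
  have h := sum_degree_eq_degree_of_existsUnique hP.existsUnique_mem_edgeSet v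
  simp only [complete_graph_degree, Fintype.card_fin, Nat.reduceSub] at h
  rw [card_filter, card_filter, mul_sum, mul_sum, ← sum_add_distrib, ← h]
  refine sum_congr rfl fun p hp ↦ ?_
  rcases hP.degree_mem p hp v with h | h | h <;> simp [h]

lemma card_degree_four_eq_zero_or_three (hP : IsDegreeProfileDecomp P) (v : Fin 16) :
    #{p ∈ P | p.degree v = 4} = 0 ∨ #{p ∈ P | p.degree v = 4} = 3 := by
  have := hP.four_mul_add_three_mul v
  omega

lemma card_eq_twelve (hP : IsDegreeProfileDecomp P) : #P = 12 := by
  have h : ∑ p ∈ P, ∑ v, p.degree v = ∑ v, ∑ p ∈ P, p.degree v := sum_comm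
  rw [sum_congr rfl hP.sum_degree,
    sum_congr rfl fun v _ ↦ sum_degree_eq_degree_of_existsUnique hP.existsUnique_mem_edgeSet v]
    at h
  simp only [sum_const, smul_eq_mul, complete_graph_degree, Fintype.card_fin, card_univ] at h
  omega

lemma sum_card_degree_four (hP : IsDegreeProfileDecomp P) :
    ∑ v, #{p ∈ P | p.degree v = 4} = 24 := by
  calc ∑ v, #{p ∈ P | p.degree v = 4} = ∑ p ∈ P, #{v | p.degree v = 4} := by
        simp only [card_filter]
        exact sum_comm
    _ = 24 := by rw [sum_congr rfl hP.card_degree_four, sum_const, hP.card_eq_twelve]; rfl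

lemma card_filter_card_degree_four_ne_three (hP : IsDegreeProfileDecomp P) :
    #{v | #{p ∈ P | p.degree v = 4} ≠ 3} = 8 := by
  have h3 : ∑ v, #{p ∈ P | p.degree v = 4} = 3 * #{v | #{p ∈ P | p.degree v = 4} = 3} := by
    rw [card_filter, mul_sum]
    refine sum_congr rfl fun v _ ↦ ?_
    rcases hP.card_degree_four_eq_zero_or_three v with h | h <;> simp [h]
  have hsplit : #{v | #{p ∈ P | p.degree v = 4} = 3} + #{v | #{p ∈ P | p.degree v = 4} ≠ 3} =
      16 :=
    card_filter_add_card_filter_not _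
  rw [hP.sum_card_degree_four] at h3
  omega

lemma degree_eq_three (hP : IsDegreeProfileDecomp P) {u v : Fin 16}
    (hu : #{p ∈ P | p.degree u = 4} ≠ 3) {p : Subgraph K₁₆} (hp : p ∈ P) (huv : p.Adj u v) :
    p.degree u = 3 := by
  have hne : p.degree u ≠ 4 := fun h4 ↦ by
    have h0 := (hP.card_degree_four_eq_zero_or_three u).resolve_right hu
    exact filter_eq_empty_iff.mp (card_eq_zero.mp h0) hp h4
  have hpos : 0 < p.degree u := Subgraph.degree_pos_iff_exists_adj.mpr ⟨v, huv⟩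
  rcases hP.degree_mem p hp u with h | h | h <;> omega

end IsDegreeProfileDecomp

theorem not_isDegreeProfileDecomp (P : Finset (Subgraph K₁₆))
    [∀ (p : Subgraph K₁₆) v, Fintype (p.neighborSet v)] : ¬ IsDegreeProfileDecomp P := by
  intro hP
  set S : Finset (Fin 16) := {v | #{p ∈ P | p.degree v = 4} ≠ 3}
  have hsub : (S.offDiag.image Sym2.mk.uncurry : Set (Sym2 (Fin 16))) ⊆
      ⋃ p ∈ P, {e ∈ p.edgeSet | ∀ x ∈ e, p.degree x = 3} := by
    intro e he
    obtain ⟨⟨u, v⟩, huv, rfl⟩ := mem_image.mp (mem_coe.mp he)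
    obtain ⟨hu, hv, hne⟩ := mem_offDiag.mp huv
    obtain ⟨p, ⟨hp, hpe⟩, -⟩ := hP.existsUnique_mem_edgeSet s(u, v) (by simpa using hne)
    have hadj : p.Adj u v := hpe
    refine Set.mem_biUnion hp ⟨hpe, ?_⟩
    simp only [Function.uncurry_apply_pair, Sym2.mem_iff]
    rintro x (rfl | rfl)
    · exact hP.degree_eq_three (mem_filter.mp hu).2 hp hadj
    · exact hP.degree_eq_three (mem_filter.mp hv).2 hp hadj.symm
  have hcount := (Set.ncard_le_ncard hsub (Set.toFinite _)).trans (set_ncard_biUnion_le P _)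
  rw [Set.ncard_coe_finset, Sym2.card_image_offDiag, hP.card_filter_card_degree_four_ne_three,
    sum_congr rfl hP.ncard_edgeSet_degree_three, sum_const, hP.card_eq_twelve] at hcount
  norm_num [Nat.choose_two_right] at hcount

/-- There is no decomposition of `K_16` into edge-disjoint copies of a graph `G`
with degree sequence `(4,4,3,3,3,3)` in which exactly two pairs of degree-3
vertices of `G` are adjacent. -/
theorem stmt_7 (G : SimpleGraph (Fin 6)) [DecidableRel G.Adj]
    (hdeg : (Finset.univ.val.map (fun x => G.degree x) : Multiset ℕ) = {4, 4, 3, 3, 3, 3})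
    (hpairs : {e ∈ G.edgeSet | ∀ x ∈ e, G.degree x = 3}.ncard = 2) :
    ¬ HasDecomp (⊤ : SimpleGraph (Fin 16)) G := by
  classical
  rintro ⟨parts, hiso, hcover⟩
  exact not_isDegreeProfileDecomp _ <| isDegreeProfileDecomp_of_forall_iso hdeg hpairs
    (P := parts.toFinset) (by simpa using hcover) (by simpa using hiso)
end

section
/- Suppose there exist edge decompositions into a fixed graph G of: K_{4i+e}, K_{xp+yq+e}, the complete multipartite graphs K_{i,i,i,i}, K_{i,i,i,i,p}, and K_{i,i,i,i,q}, where i,t,p,q are positive integers, x,y ≥ 0 with x+y = w ≤ 4t, and e ∈ {0,1}. If moreover there exists a resolvable 4-GDD structure underlying Wilson's construction for these parameters (i.e., the construction of Forbes–Griggs–Forbes applies), then there exists a G-design of order 12it + 4i + xp + yq + e. -/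
open SimpleGraph

/-- A resolvable 4-GDD of type `4^(3t+1)`: the underlying structure of Wilson's
construction as used by Forbes–Griggs–Forbes.  The `12t + 4` points are partitioned
into `3t + 1` groups of size 4; the blocks have size 4, are organised into `4t`
parallel classes (each class partitioning the point set), every pair of points from
distinct groups lies in exactly one block, and no block meets a group twice. -/
structure Resolvable4GDD (t : ℕ) where
  groups : Finset (Finset (Fin (12 * t + 4)))
  classes : Fin (4 * t) → Finset (Finset (Fin (12 * t + 4)))
  groups_card : groups.card = 3 * t + 1
  group_size : ∀ g ∈ groups, g.card = 4
  groups_partition : ∀ v, ∃! g, g ∈ groups ∧ v ∈ g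
  block_size : ∀ c, ∀ b ∈ classes c, b.card = 4
  class_partition : ∀ c, ∀ v, ∃! b, b ∈ classes c ∧ v ∈ b
  cross_once : ∀ u v : Fin (12 * t + 4), u ≠ v →
    (∀ g ∈ groups, ¬(u ∈ g ∧ v ∈ g)) →
    ∃! cb : Fin (4 * t) × Finset (Fin (12 * t + 4)),
      cb.2 ∈ classes cb.1 ∧ u ∈ cb.2 ∧ v ∈ cb.2
  within_never : ∀ u v : Fin (12 * t + 4), u ≠ v →
    (∃ g ∈ groups, u ∈ g ∧ v ∈ g) →
    ∀ c, ∀ b ∈ classes c, ¬(u ∈ b ∧ v ∈ b)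

/-!
Wilson's construction. Inflate every point of the resolvable 4-GDD to `i` vertices, attach `p`
new vertices to each of the first `x` parallel classes and `q` to each of the next `y`, and add
`e ≤ 1` common vertices. The complete graph on all these vertices is the edge-disjoint union of:
for each group, a `K_{4i+e}` on its inflated points and the common vertices; for each block of a
parallel class `c`, a `K_{i,i,i,i,m}` on its inflated points and the `m ∈ {p, q, 0}` vertices
attached to `c`; and one `K_{xp+yq+e}` on all new vertices. Indeed, two inflated points lie in a
common group or in exactly one block; an inflated point and a vertex attached to `c` lie in
exactly one block of the parallel class `c`; and since `e ≤ 1`, the group pieces share no edge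
among the common vertices.
-/

lemma Finset.exists_orderEmbOfFin_eq {α : Type*} [LinearOrder α] {s : Finset α} {k : ℕ}
    (hs : s.card = k) {a : α} : (∃ j, s.orderEmbOfFin hs j = a) ↔ a ∈ s := by
  rw [← Set.mem_range, Finset.range_orderEmbOfFin, Finset.mem_coe]

section Decomposition

variable {V V' W : Type*} {H : SimpleGraph V} {G : SimpleGraph W}

namespace HasDecomp

theorem map (f : V ↪ V') (h : HasDecomp H G) : HasDecomp (H.map f) G := by
  obtain ⟨parts, hiso, hcover⟩ := h
  let φ : Copy H (H.map f) := (Embedding.map f H).toCopy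
  refine ⟨Subgraph.map φ.toHom '' parts, ?_, ?_⟩
  · rintro _ ⟨p, hp, rfl⟩
    obtain ⟨ψ⟩ := hiso p hp
    exact ⟨ψ.comp (φ.isoSubgraphMap p).symm⟩
  · rw [edgeSet_map]
    rintro _ ⟨e, he, rfl⟩
    obtain ⟨p, ⟨hp, hep⟩, huniq⟩ := hcover e he
    refine ⟨_, ⟨⟨p, hp, rfl⟩, Subgraph.edgeSet_map _ _ ▸ ⟨e, hep, rfl⟩⟩, ?_⟩
    rintro _ ⟨⟨p', hp', rfl⟩, he'⟩
    obtain ⟨e', he', hee'⟩ := Subgraph.edgeSet_map _ _ ▸ he'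
    rw [huniq p' ⟨hp', Sym2.map.injective f.injective hee' ▸ he'⟩]

theorem of_iso {H' : SimpleGraph V'} (φ : H ≃g H') (h : HasDecomp H' G) : HasDecomp H G := by
  have hH : H'.map φ.toEquiv.symm.toEmbedding = H := by
    rw [map_symm]; exact φ.toEmbedding.comap_eq
  exact hH ▸ h.map _

theorem top_of_card {α β : Type*} [Fintype α] [Fintype β]
    (h : HasDecomp (⊤ : SimpleGraph α) G) (hcard : Fintype.card β = Fintype.card α) :
    HasDecomp (⊤ : SimpleGraph β) G :=
  h.of_iso (Iso.completeGraph (Fintype.equivOfCardEq hcard))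

theorem of_edgePartition {ι : Type*} (F : ι → SimpleGraph V) (hF : ∀ k, HasDecomp (F k) G)
    (hle : ∀ k, F k ≤ H) (hcover : ∀ e ∈ H.edgeSet, ∃! k, e ∈ (F k).edgeSet) :
    HasDecomp H G := by
  choose parts hiso hparts using hF
  let φ (k : ι) : Copy (F k) H := Copy.ofLE _ _ (hle k)
  have hedges (k : ι) (p : (F k).Subgraph) : (p.map (φ k).toHom).edgeSet = p.edgeSet := by
    simp [φ]
  refine ⟨⋃ k, Subgraph.map (φ k).toHom '' parts k, ?_, ?_⟩
  · simp only [Set.mem_iUnion, Set.mem_image]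
    rintro _ ⟨k, p, hp, rfl⟩
    obtain ⟨ψ⟩ := hiso k p hp
    exact ⟨ψ.comp ((φ k).isoSubgraphMap p).symm⟩
  · intro e he
    obtain ⟨k, hk, hkuniq⟩ := hcover e he
    obtain ⟨p, ⟨hp, hep⟩, hpuniq⟩ := hparts k e hk
    refine ⟨_, ⟨Set.mem_iUnion.2 ⟨k, p, hp, rfl⟩, (hedges k p).symm ▸ hep⟩, ?_⟩
    simp only [Set.mem_iUnion, Set.mem_image]
    rintro _ ⟨⟨k', p', hp', rfl⟩, he'⟩
    rw [hedges] at he'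
    obtain rfl := hkuniq k' (p'.edgeSet_subset he')
    rw [hpuniq p' ⟨hp', he'⟩]

end HasDecomp

end Decomposition

section Multipartite

variable {V α β κ κ' : Type*}

def multipartiteOn (s : Set V) (f : V → κ) : SimpleGraph V where
  Adj a b := a ∈ s ∧ b ∈ s ∧ f a ≠ f b
  symm := ⟨fun _ _ h => ⟨h.2.1, h.1, h.2.2.symm⟩⟩
  loopless := ⟨fun _ h => h.2.2 rfl⟩

@[simp] lemma multipartiteOn_adj {s : Set V} {f : V → κ} {a b : V} :
    (multipartiteOn s f).Adj a b ↔ a ∈ s ∧ b ∈ s ∧ f a ≠ f b := Iff.rfl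

lemma multipartiteOn_range (φ : α ↪ V) (f : V → κ) :
    multipartiteOn (Set.range φ) f = ((⊤ : SimpleGraph κ).comap (f ∘ φ)).map φ := by
  ext a b
  simp only [multipartiteOn_adj, map_adj, comap_adj, top_adj, Function.comp_apply]
  constructor
  · rintro ⟨⟨u, rfl⟩, ⟨v, rfl⟩, h⟩
    exact ⟨u, v, h, rfl, rfl⟩
  · rintro ⟨u, v, h, rfl, rfl⟩
    exact ⟨⟨u, rfl⟩, ⟨v, rfl⟩, h⟩

def comapTopIso (φ : α ≃ β) {f : α → κ} {g : β → κ'}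
    (h : ∀ a a', g (φ a) = g (φ a') ↔ f a = f a') :
    (⊤ : SimpleGraph κ).comap f ≃g (⊤ : SimpleGraph κ').comap g :=
  ⟨φ, by simp [h]⟩

variable {W : Type*} {G : SimpleGraph W}

theorem HasDecomp.multipartiteOn_range (φ : α ↪ V) {f : V → κ}
    (h : HasDecomp ((⊤ : SimpleGraph κ).comap (f ∘ φ)) G) :
    HasDecomp (multipartiteOn (Set.range φ) f) G :=
  _root_.multipartiteOn_range φ f ▸ h.map φ

theorem HasDecomp.multipartiteOn_range_id (φ : α ↪ V) (h : HasDecomp (⊤ : SimpleGraph α) G) :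
    HasDecomp (multipartiteOn (Set.range φ) id) G :=
  .multipartiteOn_range φ (by rwa [Function.id_comp, comap_top φ.injective])

end Multipartite

section Block

universe u

def sigmaFinFiveEquiv (A B : Type u) : (Σ j : Fin 5, ![A, A, A, A, B] j) ≃ Fin 4 × A ⊕ B where
  toFun
    | ⟨0, a⟩ => .inl (0, a)
    | ⟨1, a⟩ => .inl (1, a)
    | ⟨2, a⟩ => .inl (2, a)
    | ⟨3, a⟩ => .inl (3, a)
    | ⟨4, b⟩ => .inr b
  invFun
    | .inl (0, a) => ⟨0, a⟩
    | .inl (1, a) => ⟨1, a⟩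
    | .inl (2, a) => ⟨2, a⟩
    | .inl (3, a) => ⟨3, a⟩
    | .inr b => ⟨4, b⟩
  left_inv := by rintro ⟨j, a⟩; fin_cases j <;> rfl
  right_inv := by rintro (⟨j, a⟩ | b) <;> [fin_cases j <;> rfl; rfl]

/-- `K_{A,A,A,A,B}`, with parts `{j} × A` and `B`. -/
def blockGraph (A B : Type*) : SimpleGraph (Fin 4 × A ⊕ B) :=
  (⊤ : SimpleGraph (Option (Fin 4))).comap fun z => z.getLeft?.map Prod.fst

lemma getLeft?_map_fst_eq_finSuccEquivLast {A B : Type u} (z : Fin 4 × A ⊕ B) :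
    z.getLeft?.map Prod.fst = finSuccEquivLast ((sigmaFinFiveEquiv A B).symm z).1 := by
  rcases z with ⟨j, a⟩ | b
  · fin_cases j <;> rfl
  · rfl

def blockGraphIso (A B : Type u) :
    blockGraph A B ≃g completeMultipartiteGraph ![A, A, A, A, B] :=
  comapTopIso (sigmaFinFiveEquiv A B).symm fun z z' => by
    simp only [getLeft?_map_fst_eq_finSuccEquivLast, Equiv.apply_eq_iff_eq]

def blockGraphIsoOfIsEmpty (A B : Type*) [IsEmpty B] :
    blockGraph A B ≃g completeMultipartiteGraph fun _ : Fin 4 => A :=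
  comapTopIso ((Equiv.sumEmpty _ B).trans (Equiv.sigmaEquivProd _ _).symm) <| by
    rintro (_ | b) (_ | b')
    · simp
    all_goals exact isEmptyElim ‹B›

end Block

namespace Resolvable4GDD

variable {t i e : ℕ} {m : Fin (4 * t) → ℕ}

/-- Each point of the GDD is inflated to `Fin i`; the `m c` vertices of `Fin (m c)` are attached
to the parallel class `c`, and the `e` vertices of `Fin e` are common to all groups. -/
abbrev Vertex (t i : ℕ) (m : Fin (4 * t) → ℕ) (e : ℕ) : Type :=
  Fin (12 * t + 4) × Fin i ⊕ (Σ c, Fin (m c)) ⊕ Fin e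

def InGroup (g : Finset (Fin (12 * t + 4))) : Vertex t i m e → Prop
  | .inl (u, _) => u ∈ g
  | .inr (.inl _) => False
  | .inr (.inr _) => True

def InBlock (c : Fin (4 * t)) (b : Finset (Fin (12 * t + 4))) : Vertex t i m e → Prop
  | .inl (u, _) => u ∈ b
  | .inr (.inl z) => z.1 = c
  | .inr (.inr _) => False

def point (a : Vertex t i m e) : Option (Fin (12 * t + 4)) := a.getLeft?.map Prod.fst

def groupEmb (g : Finset (Fin (12 * t + 4))) (hg : g.card = 4) :
    Fin 4 × Fin i ⊕ Fin e ↪ Vertex t i m e :=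
  ((g.orderEmbOfFin hg).toEmbedding.prodMap (.refl _)).sumMap .inr

def blockEmb (c : Fin (4 * t)) (b : Finset (Fin (12 * t + 4))) (hb : b.card = 4) :
    Fin 4 × Fin i ⊕ Fin (m c) ↪ Vertex t i m e :=
  ((b.orderEmbOfFin hb).toEmbedding.prodMap (.refl _)).sumMap
    ((Function.Embedding.sigmaMk (β := fun c => Fin (m c)) c).trans .inl)

lemma setOf_inGroup {g : Finset (Fin (12 * t + 4))} (hg : g.card = 4) :
    {a | InGroup g a} = Set.range (groupEmb (i := i) (m := m) (e := e) g hg) := by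
  ext (⟨u, k⟩ | z | z) <;> simp [InGroup, groupEmb, Finset.exists_orderEmbOfFin_eq]

lemma setOf_inBlock {c : Fin (4 * t)} {b : Finset (Fin (12 * t + 4))} (hb : b.card = 4) :
    {a | InBlock c b a} = Set.range (blockEmb (i := i) (m := m) (e := e) c b hb) := by
  ext (⟨u, k⟩ | ⟨c', z⟩ | z)
  · simp [InBlock, blockEmb, Finset.exists_orderEmbOfFin_eq]
  · simp only [InBlock, blockEmb, Set.mem_ofPred_eq, Set.mem_range]
    constructor
    · rintro rfl
      exact ⟨.inr z, rfl⟩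
    · rintro ⟨_ | _, ⟨⟩⟩
      rfl
  · simp [InBlock, blockEmb]

lemma point_comp_blockEmb (c : Fin (4 * t)) (b : Finset (Fin (12 * t + 4))) (hb : b.card = 4) :
    point ∘ blockEmb (i := i) (m := m) (e := e) c b hb =
      Option.map (b.orderEmbOfFin hb) ∘ fun z => z.getLeft?.map Prod.fst := by
  funext z
  rcases z with _ | _ <;> rfl

section Pieces

variable (D : Resolvable4GDD t)

def PieceIndex : Type :=
  {g // g ∈ D.groups} ⊕
    {cb : Fin (4 * t) × Finset (Fin (12 * t + 4)) // cb.2 ∈ D.classes cb.1} ⊕ Unit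

def piece : D.PieceIndex → SimpleGraph (Vertex t i m e)
  | .inl g => multipartiteOn {a | InGroup g.1 a} id
  | .inr (.inl cb) => multipartiteOn {a | InBlock cb.1.1 cb.1.2 a} point
  | .inr (.inr _) => multipartiteOn (Set.range .inr) id

variable {W : Type*} {G : SimpleGraph W}

theorem hasDecomp_piece
    (hgroup : HasDecomp (⊤ : SimpleGraph (Fin (4 * i + e))) G)
    (hextra : HasDecomp (⊤ : SimpleGraph (Fin (∑ c, m c + e))) G)
    (hblock : ∀ c, HasDecomp (blockGraph (Fin i) (Fin (m c))) G) :
    ∀ k, HasDecomp (D.piece (i := i) (m := m) (e := e) k) G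
  | .inl ⟨g, hg⟩ => by
    rw [piece, setOf_inGroup (D.group_size g hg)]
    exact .multipartiteOn_range_id _ (hgroup.top_of_card (by simp))
  | .inr (.inl ⟨(c, b), hb⟩) => by
    rw [piece, setOf_inBlock (D.block_size c b hb)]
    refine .multipartiteOn_range _ ?_
    rw [point_comp_blockEmb, ← comap_comap,
      comap_top (Option.map_injective (b.orderEmbOfFin _).injective)]
    exact hblock c
  | .inr (.inr _) => .multipartiteOn_range_id .inr (hextra.top_of_card (by simp))

variable {D}

lemma existsUnique_piece_adj_inl_inl {u v : Fin (12 * t + 4)} {k l : Fin i}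
    (hne : (.inl (u, k) : Vertex t i m e) ≠ .inl (v, l)) :
    ∃! n : D.PieceIndex, (D.piece n).Adj (.inl (u, k) : Vertex t i m e) (.inl (v, l)) := by
  by_cases hg : ∃ g ∈ D.groups, u ∈ g ∧ v ∈ g
  · obtain ⟨g, hg, hu, hv⟩ := hg
    refine ⟨.inl ⟨g, hg⟩, ⟨hu, hv, hne⟩, ?_⟩
    rintro (⟨g', hg'⟩ | ⟨⟨c, b⟩, hb⟩ | _) hadj
    · obtain rfl := (D.groups_partition u).unique ⟨hg', hadj.1⟩ ⟨hg, hu⟩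
      rfl
    · obtain ⟨hu', hv', hne'⟩ := hadj
      have huv : u ≠ v := by rintro rfl; exact hne' rfl
      exact (D.within_never u v huv ⟨g, hg, hu, hv⟩ c b hb ⟨hu', hv'⟩).elim
    · simp [piece] at hadj
  · have huv : u ≠ v := by
      rintro rfl
      obtain ⟨g, ⟨hg', hu⟩, -⟩ := D.groups_partition u
      exact hg ⟨g, hg', hu, hu⟩
    obtain ⟨⟨c, b⟩, ⟨hb, hu, hv⟩, hcb⟩ :=
      D.cross_once u v huv fun g hg' h => hg ⟨g, hg', h⟩
    refine ⟨.inr (.inl ⟨(c, b), hb⟩), ⟨hu, hv, by simpa [point]⟩, ?_⟩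
    rintro (⟨g', hg'⟩ | ⟨⟨c', b'⟩, hb'⟩ | _) hadj
    · exact (hg ⟨g', hg', hadj.1, hadj.2.1⟩).elim
    · obtain ⟨rfl, rfl⟩ := Prod.mk.inj (hcb (c', b') ⟨hb', hadj.1, hadj.2.1⟩)
      rfl
    · simp [piece] at hadj

lemma existsUnique_piece_adj_inl_inr (u : Fin (12 * t + 4)) (k : Fin i)
    (y : (Σ c, Fin (m c)) ⊕ Fin e) :
    ∃! n : D.PieceIndex, (D.piece n).Adj (.inl (u, k) : Vertex t i m e) (.inr y) := by
  rcases y with ⟨c, z⟩ | z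
  · obtain ⟨b, ⟨hb, hu⟩, hbu⟩ := D.class_partition c u
    refine ⟨.inr (.inl ⟨(c, b), hb⟩), ⟨hu, rfl, by simp [point]⟩, ?_⟩
    rintro (⟨g', hg'⟩ | ⟨⟨c', b'⟩, hb'⟩ | _) hadj
    · exact hadj.2.1.elim
    · obtain ⟨hu', rfl, -⟩ := hadj
      obtain rfl := hbu b' ⟨hb', hu'⟩
      rfl
    · simp [piece] at hadj
  · obtain ⟨g, ⟨hg, hu⟩, hgu⟩ := D.groups_partition u
    refine ⟨.inl ⟨g, hg⟩, ⟨hu, trivial, Sum.inl_ne_inr⟩, ?_⟩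
    rintro (⟨g', hg'⟩ | ⟨⟨c', b'⟩, hb'⟩ | _) hadj
    · obtain rfl := hgu g' ⟨hg', hadj.1⟩
      rfl
    · exact hadj.2.1.elim
    · simp [piece] at hadj

lemma existsUnique_piece_adj_inr_inr (he : e ≤ 1) {y y' : (Σ c, Fin (m c)) ⊕ Fin e}
    (hne : (.inr y : Vertex t i m e) ≠ .inr y') :
    ∃! n : D.PieceIndex, (D.piece n).Adj (.inr y : Vertex t i m e) (.inr y') := by
  refine ⟨.inr (.inr ()), ⟨⟨y, rfl⟩, ⟨y', rfl⟩, hne⟩, ?_⟩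
  rintro (⟨g', hg'⟩ | ⟨⟨c', b'⟩, hb'⟩ | _) hadj
  · rcases y with _ | z
    · exact hadj.1.elim
    rcases y' with _ | z'
    · exact hadj.2.1.elim
    obtain rfl : z = z' := Fin.ext (by omega)
    exact (hne rfl).elim
  · exact (hadj.2.2 rfl).elim
  · rfl

lemma existsUnique_piece_adj (he : e ≤ 1) {a b : Vertex t i m e} (hab : a ≠ b) :
    ∃! n : D.PieceIndex, (D.piece n).Adj a b := by
  rcases a with ⟨u, k⟩ | y <;> rcases b with ⟨v, l⟩ | y'
  · exact existsUnique_piece_adj_inl_inl hab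
  · exact existsUnique_piece_adj_inl_inr u k y'
  · exact (existsUnique_congr fun n => adj_comm _ _ _).1 (existsUnique_piece_adj_inl_inr v l y)
  · exact existsUnique_piece_adj_inr_inr he hab

end Pieces

variable {W : Type*} {G : SimpleGraph W}

theorem hasDecomp_inflate (D : Resolvable4GDD t) (he : e ≤ 1)
    (hgroup : HasDecomp (⊤ : SimpleGraph (Fin (4 * i + e))) G)
    (hextra : HasDecomp (⊤ : SimpleGraph (Fin (∑ c, m c + e))) G)
    (hblock : ∀ c, HasDecomp (blockGraph (Fin i) (Fin (m c))) G) :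
    HasDecomp (⊤ : SimpleGraph (Vertex t i m e)) G :=
  .of_edgePartition D.piece (D.hasDecomp_piece hgroup hextra hblock) (fun _ => le_top) <| by
    rintro ⟨a, b⟩ hab
    exact existsUnique_piece_adj he hab

end Resolvable4GDD

lemma Fin.sum_ite_lt_ite_lt {n x y : ℕ} (h : x + y ≤ n) (p q : ℕ) :
    ∑ c : Fin n, (if (c : ℕ) < x then p else if (c : ℕ) < x + y then q else 0) =
      x * p + y * q := by
  obtain ⟨r, rfl⟩ := Nat.exists_eq_add_of_le h
  have h1 : ∀ c ∈ Finset.range x, (if c < x then p else if c < x + y then q else 0) = p :=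
    fun c hc => if_pos (Finset.mem_range.1 hc)
  have h2 : ∀ c ∈ Finset.range y,
      (if x + c < x then p else if x + c < x + y then q else 0) = q :=
    fun c hc => (if_neg (by omega)).trans (if_pos (by simpa using Finset.mem_range.1 hc))
  have h3 : ∀ c ∈ Finset.range r,
      (if x + y + c < x then p else if x + y + c < x + y then q else 0) = 0 :=
    fun c _ => (if_neg (by omega)).trans (if_neg (by omega))
  rw [Fin.sum_univ_eq_sum_range (fun c => if c < x then p else if c < x + y then q else 0),
    Finset.sum_range_add, Finset.sum_range_add, Finset.sum_congr rfl h1, Finset.sum_congr rfl h2,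
    Finset.sum_congr rfl h3]
  simp

theorem stmt_11_general {W : Type*} (G : SimpleGraph W)
    (i t p q : ℕ)
    (w x y e : ℕ) (hxy : x + y = w) (hw : w ≤ 4 * t) (he : e = 0 ∨ e = 1)
    (h1 : HasDecomp (⊤ : SimpleGraph (Fin (4 * i + e))) G)
    (h2 : HasDecomp (⊤ : SimpleGraph (Fin (x * p + y * q + e))) G)
    (h3 : HasDecomp (completeMultipartiteGraph (fun _ : Fin 4 => Fin i)) G)
    (h4 : HasDecomp (completeMultipartiteGraph ![Fin i, Fin i, Fin i, Fin i, Fin p]) G)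
    (h5 : HasDecomp (completeMultipartiteGraph ![Fin i, Fin i, Fin i, Fin i, Fin q]) G)
    (hgdd : Nonempty (Resolvable4GDD t)) :
    HasDecomp (⊤ : SimpleGraph (Fin (12 * i * t + 4 * i + x * p + y * q + e))) G := by
  obtain ⟨D⟩ := hgdd
  let m (c : Fin (4 * t)) : ℕ := if (c : ℕ) < x then p else if (c : ℕ) < x + y then q else 0
  have hm : ∑ c, m c = x * p + y * q := Fin.sum_ite_lt_ite_lt (by omega) p q
  have hblock (c : Fin (4 * t)) : HasDecomp (blockGraph (Fin i) (Fin (m c))) G := by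
    by_cases hx : (c : ℕ) < x
    · rw [show m c = p from if_pos hx]
      exact h4.of_iso (blockGraphIso _ _)
    by_cases hy : (c : ℕ) < x + y
    · rw [show m c = q from (if_neg hx).trans (if_pos hy)]
      exact h5.of_iso (blockGraphIso _ _)
    · rw [show m c = 0 from (if_neg hx).trans (if_neg hy)]
      exact h3.of_iso (blockGraphIsoOfIsEmpty _ _)
  refine (D.hasDecomp_inflate (by omega) h1 (hm ▸ h2) hblock).top_of_card ?_
  simp only [Fintype.card_sum, Fintype.card_prod, Fintype.card_sigma, Fintype.card_fin, hm]
  ring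

/-- Wilson's construction (Forbes–Griggs–Forbes): if `K_{4i+e}`, `K_{xp+yq+e}`,
`K_{i,i,i,i}`, `K_{i,i,i,i,p}` and `K_{i,i,i,i,q}` all decompose into `G`, and the
resolvable 4-GDD structure underlying the construction exists, then there is a
`G`-design of order `12it + 4i + xp + yq + e`. -/
theorem stmt_11 {W : Type*} (G : SimpleGraph W)
    (i t p q : ℕ) (hi : 0 < i) (ht : 0 < t) (hp : 0 < p) (hq : 0 < q)
    (w x y e : ℕ) (hxy : x + y = w) (hw : w ≤ 4 * t) (he : e = 0 ∨ e = 1)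
    (h1 : HasDecomp (⊤ : SimpleGraph (Fin (4 * i + e))) G)
    (h2 : HasDecomp (⊤ : SimpleGraph (Fin (x * p + y * q + e))) G)
    (h3 : HasDecomp (completeMultipartiteGraph (fun _ : Fin 4 => Fin i)) G)
    (h4 : HasDecomp (completeMultipartiteGraph ![Fin i, Fin i, Fin i, Fin i, Fin p]) G)
    (h5 : HasDecomp (completeMultipartiteGraph ![Fin i, Fin i, Fin i, Fin i, Fin q]) G)
    (hgdd : Nonempty (Resolvable4GDD t)) :
    HasDecomp (⊤ : SimpleGraph (Fin (12 * i * t + 4 * i + x * p + y * q + e))) G :=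
  stmt_11_general G i t p q w x y e hxy hw he h1 h2 h3 h4 h5 hgdd
end
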